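/- arXiv:1507.01087 — 5 statements merged into one kernel-verified Lean document; each statement's English description precedes it below -/
import Mathlib

section
/- Let n ≥ 3, let I ⊆ {1,…,N} with |I| = n−1, let j ∉ I, and let x₁,…,x_N ∈ ℝ². Set x̄^I = (n−1)^{-1}∑_{i∈I} x_i and x̄^{I∪{j}} = n^{-1}∑_{i∈I∪{j}} x_i. Then (2n−3) min_{k∈I} |x_k − x_j|² ≥ n ∑_{i∈I∪{j}} |x_i − x̄^{I∪{j}}|² − 3(n−1) ∑_{i∈I} |x_i − x̄^I|². -/
/-!
Write `V(s)` for the sum of squared distances of the points of `s` to their barycenter. Huygens'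
formula gives `2 #s V(s) = ∑_{i,l ∈ s} ‖x i - x l‖²`, hence
`n V(I ∪ {j}) = (n - 1) V(I) + ∑_{i ∈ I} ‖x i - x j‖²`. For the nearest point `x k`, the triangle
inequality bounds the last sum by `(2n - 3) ‖x k - x j‖² + 2 ∑_{i ∈ I} ‖x i - x k‖²`, and
`∑_{i ∈ I} ‖x i - x k‖² ≤ (n - 1) V(I)` because `x k - x̄` is minus the sum of the other `n - 2`
deviations (Cauchy–Schwarz).
-/

open Finset
open scoped RealInnerProductSpace

variable {ι : Type*}

theorem sum_norm_sub_sq_le_of_mem {E : Type*} [SeminormedAddCommGroup E] {s : Finset ι}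
    (x : ι → E) (y : E) {k : ι} (hk : k ∈ s) :
    ∑ i ∈ s, ‖x i - y‖ ^ 2 ≤ (2 * #s - 1) * ‖x k - y‖ ^ 2 + 2 * ∑ i ∈ s, ‖x i - x k‖ ^ 2 := by
  classical
  have htri (i : ι) : ‖x i - y‖ ^ 2 ≤ 2 * ‖x i - x k‖ ^ 2 + 2 * ‖x k - y‖ ^ 2 := by
    calc ‖x i - y‖ ^ 2 ≤ (‖x i - x k‖ + ‖x k - y‖) ^ 2 := by
          gcongr
          exact norm_sub_le_norm_sub_add_norm_sub _ _ _
      _ ≤ 2 * (‖x i - x k‖ ^ 2 + ‖x k - y‖ ^ 2) := add_sq_le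
      _ = 2 * ‖x i - x k‖ ^ 2 + 2 * ‖x k - y‖ ^ 2 := mul_add _ _ _
  have hcard : (#(s.erase k) : ℝ) = #s - 1 := by
    rw [card_erase_of_mem hk, Nat.cast_pred (card_pos.mpr ⟨k, hk⟩)]
  have hrest := sum_le_sum fun i (_ : i ∈ s.erase k) => htri i
  rw [sum_add_distrib, ← mul_sum, sum_const, nsmul_eq_mul, hcard] at hrest
  rw [← add_sum_erase s _ hk, ← add_sum_erase s (fun i => ‖x i - x k‖ ^ 2) hk, sub_self,
    norm_zero]
  linarith

section Barycenter

variable {E : Type*} [AddCommGroup E] [Module ℝ E]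

noncomputable def barycenter (s : Finset ι) (x : ι → E) : E :=
  (#s : ℝ)⁻¹ • ∑ i ∈ s, x i

variable (s : Finset ι) (x : ι → E)

theorem card_smul_barycenter : (#s : ℝ) • barycenter s x = ∑ i ∈ s, x i := by
  rcases s.eq_empty_or_nonempty with rfl | _
  · simp
  · rw [barycenter, smul_smul, mul_inv_cancel₀ (by positivity), one_smul]

theorem sum_sub_barycenter : ∑ i ∈ s, (x i - barycenter s x) = 0 := by
  rw [sum_sub_distrib, sum_const, ← Nat.cast_smul_eq_nsmul ℝ, card_smul_barycenter, sub_self]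

end Barycenter

section Dispersion

variable {E : Type*} [NormedAddCommGroup E] [InnerProductSpace ℝ E] (s : Finset ι) (x : ι → E)

/-- Huygens' formula. -/
theorem sum_norm_sub_sq_eq (p : E) :
    ∑ i ∈ s, ‖x i - p‖ ^ 2 =
      ∑ i ∈ s, ‖x i - barycenter s x‖ ^ 2 + #s * ‖barycenter s x - p‖ ^ 2 := by
  have hsplit (i : ι) : ‖x i - p‖ ^ 2 = ‖x i - barycenter s x‖ ^ 2
      + 2 * ⟪x i - barycenter s x, barycenter s x - p⟫ + ‖barycenter s x - p‖ ^ 2 := by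
    rw [← sub_add_sub_cancel (x i) (barycenter s x) p, norm_add_sq_real]
  simp only [hsplit, sum_add_distrib, ← mul_sum, ← sum_inner, sum_sub_barycenter, inner_zero_left,
    mul_zero, add_zero, sum_const, nsmul_eq_mul]

theorem sum_sum_norm_sub_sq :
    ∑ i ∈ s, ∑ l ∈ s, ‖x i - x l‖ ^ 2 = 2 * #s * ∑ i ∈ s, ‖x i - barycenter s x‖ ^ 2 := by
  have hl (l : ι) : ∑ i ∈ s, ‖x i - x l‖ ^ 2 =
      ∑ i ∈ s, ‖x i - barycenter s x‖ ^ 2 + #s * ‖x l - barycenter s x‖ ^ 2 := by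
    rw [sum_norm_sub_sq_eq s x (x l), norm_sub_rev]
  rw [sum_comm]
  simp only [hl, sum_add_distrib, sum_const, nsmul_eq_mul, ← mul_sum]
  ring

theorem card_insert_mul_sum_norm_sub_barycenter_sq {j : ι} [DecidableEq ι] (hj : j ∉ s) :
    #(insert j s) * ∑ i ∈ insert j s, ‖x i - barycenter (insert j s) x‖ ^ 2 =
      #s * ∑ i ∈ s, ‖x i - barycenter s x‖ ^ 2 + ∑ i ∈ s, ‖x i - x j‖ ^ 2 := by
  have hsplit : ∑ i ∈ insert j s, ∑ l ∈ insert j s, ‖x i - x l‖ ^ 2 =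
      2 * ∑ i ∈ s, ‖x i - x j‖ ^ 2 + ∑ i ∈ s, ∑ l ∈ s, ‖x i - x l‖ ^ 2 := by
    simp only [sum_insert hj, sub_self, norm_zero, sum_add_distrib, norm_sub_rev (x j)]
    ring
  rw [sum_sum_norm_sub_sq, sum_sum_norm_sub_sq] at hsplit
  linarith

theorem card_mul_norm_sub_barycenter_sq_le {k : ι} (hk : k ∈ s) :
    #s * ‖x k - barycenter s x‖ ^ 2 ≤ (#s - 1) * ∑ i ∈ s, ‖x i - barycenter s x‖ ^ 2 := by
  classical
  set b := barycenter s x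
  have hrest : x k - b = -∑ i ∈ s.erase k, (x i - b) := by
    rw [eq_neg_iff_add_eq_zero, add_sum_erase s (fun i => x i - b) hk, sum_sub_barycenter]
  have hcard : (#(s.erase k) : ℝ) = #s - 1 := by
    rw [card_erase_of_mem hk, Nat.cast_pred (card_pos.mpr ⟨k, hk⟩)]
  have hcs : ‖x k - b‖ ^ 2 ≤ (#s - 1) * ∑ i ∈ s.erase k, ‖x i - b‖ ^ 2 := by
    calc ‖x k - b‖ ^ 2 ≤ (∑ i ∈ s.erase k, ‖x i - b‖) ^ 2 := by
          rw [hrest, norm_neg]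
          gcongr
          exact norm_sum_le _ _
      _ ≤ #(s.erase k) * ∑ i ∈ s.erase k, ‖x i - b‖ ^ 2 := sq_sum_le_card_mul_sum_sq
      _ = (#s - 1) * ∑ i ∈ s.erase k, ‖x i - b‖ ^ 2 := by rw [hcard]
  rw [← add_sum_erase s (fun i => ‖x i - b‖ ^ 2) hk]
  linarith

theorem sum_norm_sub_sq_le_card_mul {k : ι} (hk : k ∈ s) :
    ∑ i ∈ s, ‖x i - x k‖ ^ 2 ≤ #s * ∑ i ∈ s, ‖x i - barycenter s x‖ ^ 2 := by
  rw [sum_norm_sub_sq_eq s x (x k), norm_sub_rev]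
  linarith [card_mul_norm_sub_barycenter_sq_le s x hk]

theorem card_insert_mul_sum_sub_three_mul_le [DecidableEq ι] {j k : ι} (hj : j ∉ s) (hk : k ∈ s) :
    #(insert j s) * ∑ i ∈ insert j s, ‖x i - barycenter (insert j s) x‖ ^ 2
        - 3 * #s * ∑ i ∈ s, ‖x i - barycenter s x‖ ^ 2
      ≤ (2 * #s - 1) * ‖x k - x j‖ ^ 2 := by
  rw [card_insert_mul_sum_norm_sub_barycenter_sq s x hj]
  linarith [sum_norm_sub_sq_le_of_mem x (x j) hk, sum_norm_sub_sq_le_card_mul s x hk]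

end Dispersion

/-- For n ≥ 3, I ⊆ {1,…,N} with |I| = n−1, j ∉ I and points x₁,…,x_N ∈ ℝ²,
(2n−3) min_{k∈I} |x_k − x_j|² ≥ n ∑_{i∈I∪{j}} |x_i − x̄^{I∪{j}}|² − 3(n−1) ∑_{i∈I} |x_i − x̄^I|². -/
theorem stmt8 (N n : ℕ) (hn : 3 ≤ n) (I : Finset (Fin N)) (hI : I.card = n - 1)
    (j : Fin N) (hj : j ∉ I) (x : Fin N → EuclideanSpace ℝ (Fin 2)) :
    (n : ℝ) * ∑ i ∈ insert j I, ‖x i - (n : ℝ)⁻¹ • ∑ m ∈ insert j I, x m‖ ^ 2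
        - 3 * ((n : ℝ) - 1) * ∑ i ∈ I, ‖x i - ((n : ℝ) - 1)⁻¹ • ∑ m ∈ I, x m‖ ^ 2
      ≤ (2 * (n : ℝ) - 3) *
          I.inf' (Finset.card_pos.mp (by omega)) (fun k => ‖x k - x j‖ ^ 2) := by
  have hcardI : (#I : ℝ) = n - 1 := by rw [hI, Nat.cast_pred (by omega)]
  have hcardJ : (#(insert j I) : ℝ) = n := by
    rw [card_insert_of_notMem hj, Nat.cast_succ, hcardI, sub_add_cancel]
  obtain ⟨k, hk, hmin⟩ := exists_mem_eq_inf' (card_pos.mp (by omega : 0 < #I))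
    (fun k => ‖x k - x j‖ ^ 2)
  have h := card_insert_mul_sum_sub_three_mul_le I x hj hk
  simp only [barycenter, hcardI, hcardJ] at h
  rw [hmin]
  linarith
end

section
/- Let n ≥ 2, I a finite set of cardinality n, (x_i)_{i∈I} points in ℝ², and k ∈ I. Then 2 ∑_{i∈I, i≠k} |x_i − x_k|² ≤ ∑_{i∈I} ∑_{m∈I} |x_i − x_m|², provided k realizes the maximum of k ↦ ∑_{i≠k}|x_i−x_k|² (in fact the bound 2 max_{k∈I} ∑_{i∈I, i≠k} |x_i − x_k|² ≤ ∑_{i,m∈I} |x_i − x_m|² holds). -/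
/-!
Expanding the squares around a base point `c` gives
`∑ᵢ ∑ₘ ‖xᵢ - xₘ‖² = 2n ∑ᵢ ‖xᵢ - c‖² - 2 ‖∑ᵢ (xᵢ - c)‖²`.
Taking `c = x_k`, the vector sum has only `n - 1` nonzero terms, so by Cauchy–Schwarz its squared
norm is at most `(n - 1) ∑ᵢ ‖xᵢ - x_k‖²`, leaving a double sum of at least `2 ∑ᵢ ‖xᵢ - x_k‖²`.
-/

open Finset

theorem norm_sum_sq_le_card_mul_sum_norm_sq {E ι : Type*} [SeminormedAddCommGroup E]
    (s : Finset ι) (v : ι → E) :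
    ‖∑ i ∈ s, v i‖ ^ 2 ≤ #s * ∑ i ∈ s, ‖v i‖ ^ 2 :=
  (pow_le_pow_left₀ (norm_nonneg _) (norm_sum_le s v) 2).trans sq_sum_le_card_mul_sum_sq

section

variable {E ι : Type*} [SeminormedAddCommGroup E] [InnerProductSpace ℝ E]

theorem sum_sum_norm_sub_sq_eq (I : Finset ι) (x : ι → E) (c : E) :
    ∑ i ∈ I, ∑ m ∈ I, ‖x i - x m‖ ^ 2
      = 2 * #I * ∑ i ∈ I, ‖x i - c‖ ^ 2 - 2 * ‖∑ i ∈ I, (x i - c)‖ ^ 2 := by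
  have hsplit : ∀ i m, ‖x i - x m‖ ^ 2
      = ‖x i - c‖ ^ 2 + ‖x m - c‖ ^ 2 - 2 * inner ℝ (x i - c) (x m - c) := by
    intro i m
    rw [← sub_sub_sub_cancel_right (x i) (x m) c, norm_sub_sq_real]
    ring
  simp only [hsplit, sum_sub_distrib, sum_add_distrib, ← mul_sum, ← inner_sum, ← sum_inner,
    real_inner_self_eq_norm_sq, sum_const, nsmul_eq_mul]
  ring

theorem two_mul_sum_erase_norm_sub_sq_le [DecidableEq ι] {I : Finset ι} (x : ι → E) {k : ι}
    (hk : k ∈ I) :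
    2 * ∑ i ∈ I.erase k, ‖x i - x k‖ ^ 2 ≤ ∑ i ∈ I, ∑ m ∈ I, ‖x i - x m‖ ^ 2 := by
  have hS : ∑ i ∈ I.erase k, ‖x i - x k‖ ^ 2 = ∑ i ∈ I, ‖x i - x k‖ ^ 2 :=
    sum_erase _ (by simp)
  have hT : ∑ i ∈ I.erase k, (x i - x k) = ∑ i ∈ I, (x i - x k) := sum_erase _ (by simp)
  have hcard : (#(I.erase k) : ℝ) = #I - 1 := by
    rw [card_erase_of_mem hk, Nat.cast_pred (card_pos.mpr ⟨k, hk⟩)]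
  have hCS := norm_sum_sq_le_card_mul_sum_norm_sq (I.erase k) (fun i => x i - x k)
  rw [hS, hT, hcard] at hCS
  rw [hS, sum_sum_norm_sub_sq_eq I x (x k)]
  nlinarith [sum_nonneg fun i (_ : i ∈ I) => sq_nonneg ‖x i - x k‖]

end

/-- For a finite family of at least two points in ℝ²,
2 max_{k∈I} ∑_{i∈I, i≠k} |xᵢ − x_k|² ≤ ∑_{i,m∈I} |xᵢ − x_m|². -/
theorem stmt9 {ι : Type*} [DecidableEq ι] (I : Finset ι) (hI : 2 ≤ I.card)
    (x : ι → EuclideanSpace ℝ (Fin 2)) :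
    2 * I.sup' (Finset.card_pos.mp (by omega))
        (fun k => ∑ i ∈ I.erase k, ‖x i - x k‖ ^ 2)
      ≤ ∑ i ∈ I, ∑ m ∈ I, ‖x i - x m‖ ^ 2 := by
  obtain ⟨k, hk, hmax⟩ := exists_mem_eq_sup' (I.card_pos.mp (by omega))
    (fun k => ∑ i ∈ I.erase k, ‖x i - x k‖ ^ 2)
  rw [hmax]
  exact two_mul_sum_erase_norm_sub_sq_le x hk
end

section
/- Fix N ≥ 3 and χ > 0 and define δ(x) = (x−1)(2 − χx/(4πN)). If χ ∈ (8π(N−2)/(N−1), 4πN/3], then the two roots x^± = [1 + 8πN/χ ± √((1+8πN/χ)² − 64πN/χ)]/2 of δ(x) = 2 are real and satisfy x^− ∈ (2,3] and x^+ ∈ [3,N). -/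
open Real

set_option maxHeartbeats 1000000 in
/-- For N ≥ 3 and χ ∈ (8π(N−2)/(N−1), 4πN/3], the two roots
x^± = [1 + 8πN/χ ± √((1+8πN/χ)² − 64πN/χ)]/2 of (x−1)(2 − χx/(4πN)) = 2 are real
and satisfy x⁻ ∈ (2,3] and x⁺ ∈ [3,N). -/
theorem stmt14 (N : ℕ) (hN : 3 ≤ N) (χ : ℝ)
    (hlo : 8 * π * ((N : ℝ) - 2) / ((N : ℝ) - 1) < χ)
    (hhi : χ ≤ 4 * π * (N : ℝ) / 3) :
    0 ≤ (1 + 8 * π * (N : ℝ) / χ) ^ 2 - 64 * π * (N : ℝ) / χ ∧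
    (((1 + 8 * π * (N : ℝ) / χ
          - Real.sqrt ((1 + 8 * π * (N : ℝ) / χ) ^ 2 - 64 * π * (N : ℝ) / χ)) / 2 - 1) *
        (2 - χ * ((1 + 8 * π * (N : ℝ) / χ
          - Real.sqrt ((1 + 8 * π * (N : ℝ) / χ) ^ 2 - 64 * π * (N : ℝ) / χ)) / 2)
            / (4 * π * (N : ℝ))) = 2) ∧
    (((1 + 8 * π * (N : ℝ) / χ
          + Real.sqrt ((1 + 8 * π * (N : ℝ) / χ) ^ 2 - 64 * π * (N : ℝ) / χ)) / 2 - 1) *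
        (2 - χ * ((1 + 8 * π * (N : ℝ) / χ
          + Real.sqrt ((1 + 8 * π * (N : ℝ) / χ) ^ 2 - 64 * π * (N : ℝ) / χ)) / 2)
            / (4 * π * (N : ℝ))) = 2) ∧
    2 < (1 + 8 * π * (N : ℝ) / χ
          - Real.sqrt ((1 + 8 * π * (N : ℝ) / χ) ^ 2 - 64 * π * (N : ℝ) / χ)) / 2 ∧
    (1 + 8 * π * (N : ℝ) / χ
          - Real.sqrt ((1 + 8 * π * (N : ℝ) / χ) ^ 2 - 64 * π * (N : ℝ) / χ)) / 2 ≤ 3 ∧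
    3 ≤ (1 + 8 * π * (N : ℝ) / χ
          + Real.sqrt ((1 + 8 * π * (N : ℝ) / χ) ^ 2 - 64 * π * (N : ℝ) / χ)) / 2 ∧
    (1 + 8 * π * (N : ℝ) / χ
          + Real.sqrt ((1 + 8 * π * (N : ℝ) / χ) ^ 2 - 64 * π * (N : ℝ) / χ)) / 2
        < (N : ℝ) := by
  have hπ := Real.pi_pos
  have hN3 : (3:ℝ) ≤ (N:ℝ) := by exact_mod_cast hN
  have hχ : 0 < χ := by
    have : 0 < 8 * π * ((N : ℝ) - 2) / ((N : ℝ) - 1) := by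
      apply div_pos (by nlinarith) (by linarith)
    linarith
  have h64 : 64 * π * (N : ℝ) / χ = 8 * (8 * π * (N : ℝ) / χ) := by ring
  rw [h64]
  set s := 8 * π * (N : ℝ) / χ with hsdef
  have hs0 : 0 < s := by positivity
  have hχs : χ * s = 8 * π * (N : ℝ) := by
    rw [hsdef]; field_simp
  have hs6 : 6 ≤ s := by
    rw [hsdef, le_div_iff₀ hχ]; linarith
  have hsN : s * ((N:ℝ) - 2) < (N:ℝ) * ((N:ℝ) - 1) := by
    rw [hsdef, div_mul_eq_mul_div, div_lt_iff₀ hχ]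
    have h1 : 8 * π * ((N:ℝ) - 2) < χ * ((N:ℝ) - 1) := by
      rw [div_lt_iff₀ (by linarith : (0:ℝ) < (N:ℝ) - 1)] at hlo
      linarith
    nlinarith
  have hN5 : (5:ℕ) ≤ N := by
    by_contra h
    push_neg at h
    interval_cases N <;> [skip; skip] <;> (norm_num at hN3 hsN ⊢; nlinarith)
  have hN5' : (5:ℝ) ≤ (N:ℝ) := by exact_mod_cast hN5
  have hD : 0 ≤ (1 + s) ^ 2 - 8 * s := by nlinarith
  set r := Real.sqrt ((1 + s) ^ 2 - 8 * s) with hrdef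
  have hr0 : 0 ≤ r := Real.sqrt_nonneg _
  have hr2 : r ^ 2 = (1 + s) ^ 2 - 8 * s := Real.sq_sqrt hD
  have hr_lt : r < s - 3 := by nlinarith
  have hr_ge : s - 5 ≤ r := by nlinarith
  have hr_ltN : r < 2 * (N:ℝ) - 1 - s := by
    have hpos : 0 < 2 * (N:ℝ) - 1 - s := by nlinarith
    nlinarith
  have h4πN : 4 * π * (N : ℝ) = χ * s / 2 := by rw [hχs]; ring
  refine ⟨hD, ?_, ?_, by nlinarith, by nlinarith, by nlinarith, by nlinarith⟩
  · rw [h4πN]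
    field_simp
    nlinarith [hr2]
  · rw [h4πN]
    field_simp
    nlinarith [hr2]
end

section
/- Let x₁,…,x_N ∈ ℝ², n ≥ 4, I ⊆ {1,…,N} with |I| = n−1, and j ∉ I. Suppose ∑_{i∈I∪{j}} |x_i − x̄^{I∪{j}}|² ≥ 2a and ∑_{i∈I} |x_i − x̄^I|² ≤ 2b with b = a/3 and a > 0 (where x̄^J denotes the barycenter over J). Then min_{k∈I} |x_k − x_j|² ≥ 2a/(2n−3). -/
/-!
Let `c` be the barycenter of `I`, `u = x j - c` and `v = x k - c`. Adding the point `x j` to `I`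
raises `n` times the inertia by `n - 1` times `‖u‖²`; since the deviations over `I \ {k}` sum to
`-v`, Cauchy–Schwarz bounds `(n - 1) ‖v‖²` by `(n - 2)` times the inertia of `I`; and expanding
`‖(n - 2) u - (2n - 3) v‖² ≥ 0` bounds `‖u - v‖² = ‖x k - x j‖²` from below in terms of these two
quantities. Together they give
`(2n - 3) ‖x k - x j‖² ≥ n · inertia (I ∪ {j}) - 3 (n - 1) · inertia I ≥ 2a`.
-/

open Finset RealInnerProductSpace

namespace Finset

section Module

variable {ι E : Type*} [AddCommGroup E] [Module ℝ E] (s : Finset ι) (x : ι → E)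

noncomputable def barycenter : E := (#s : ℝ)⁻¹ • ∑ i ∈ s, x i

theorem card_smul_barycenter : (#s : ℝ) • s.barycenter x = ∑ i ∈ s, x i := by
  rcases s.eq_empty_or_nonempty with rfl | hs
  · simp
  · exact smul_inv_smul₀ (by simpa using hs.ne_empty) _

theorem sum_sub_barycenter : ∑ i ∈ s, (x i - s.barycenter x) = 0 := by
  rw [sum_sub_distrib, sum_const, ← Nat.cast_smul_eq_nsmul ℝ, card_smul_barycenter, sub_self]

theorem card_succ_smul_barycenter_insert_sub {j : ι} [DecidableEq ι] (hj : j ∉ s) :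
    ((#s : ℝ) + 1) • ((insert j s).barycenter x - s.barycenter x) = x j - s.barycenter x := by
  have h := card_smul_barycenter (insert j s) x
  rw [card_insert_of_notMem hj, sum_insert hj, ← card_smul_barycenter s x, Nat.cast_succ] at h
  rw [smul_sub, h, add_smul, one_smul]
  abel

end Module

variable {ι E : Type*} [NormedAddCommGroup E] [InnerProductSpace ℝ E] (s : Finset ι) (x : ι → E)

/-- The moment of inertia of the points `x i`, `i ∈ s`, about their barycenter; the paper's
`R^s` is half of it. -/
noncomputable def inertia : ℝ := ∑ i ∈ s, ‖x i - s.barycenter x‖ ^ 2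

/-- Huygens–Steiner (parallel axis) theorem. -/
theorem sum_norm_sub_sq_eq_inertia_add (c : E) :
    ∑ i ∈ s, ‖x i - c‖ ^ 2 = s.inertia x + #s * ‖s.barycenter x - c‖ ^ 2 := by
  have hsplit (i : ι) : ‖x i - c‖ ^ 2 = ‖x i - s.barycenter x‖ ^ 2
      + 2 * ⟪x i - s.barycenter x, s.barycenter x - c⟫ + ‖s.barycenter x - c‖ ^ 2 := by
    rw [← norm_add_sq_real, sub_add_sub_cancel]
  simp only [hsplit, sum_add_distrib, ← mul_sum, ← sum_inner, sum_sub_barycenter, inner_zero_left,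
    sum_const, nsmul_eq_mul, inertia]
  ring

theorem inertia_insert {j : ι} [DecidableEq ι] (hj : j ∉ s) :
    (#s + 1) * (insert j s).inertia x
      = (#s + 1) * s.inertia x + #s * ‖x j - s.barycenter x‖ ^ 2 := by
  have hshift := congrArg (‖·‖ ^ 2) (card_succ_smul_barycenter_insert_sub s x hj)
  have hsteiner := sum_norm_sub_sq_eq_inertia_add (insert j s) x (s.barycenter x)
  simp only [norm_smul, mul_pow, Real.norm_eq_abs, sq_abs] at hshift
  rw [sum_insert hj, card_insert_of_notMem hj, Nat.cast_succ] at hsteiner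
  unfold inertia at hsteiner ⊢
  linear_combination -(#s + 1 : ℝ) * hsteiner - hshift

theorem card_mul_norm_sub_barycenter_sq_le {k : ι} (hk : k ∈ s) :
    #s * ‖x k - s.barycenter x‖ ^ 2 ≤ (#s - 1) * s.inertia x := by
  classical
  have hrest : ∑ i ∈ s.erase k, (x i - s.barycenter x) = -(x k - s.barycenter x) := by
    rw [eq_neg_iff_add_eq_zero, add_comm, add_sum_erase s (fun i ↦ x i - s.barycenter x) hk,
      sum_sub_barycenter]
  set v := x k - s.barycenter x
  have hcs : ‖v‖ ^ 2 ≤ (#s - 1) * ∑ i ∈ s.erase k, ‖x i - s.barycenter x‖ ^ 2 := calc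
    ‖v‖ ^ 2 = ‖∑ i ∈ s.erase k, (x i - s.barycenter x)‖ ^ 2 := by rw [hrest, norm_neg]
    _ ≤ (∑ i ∈ s.erase k, ‖x i - s.barycenter x‖) ^ 2 := by gcongr; exact norm_sum_le _ _
    _ ≤ #(s.erase k) * ∑ i ∈ s.erase k, ‖x i - s.barycenter x‖ ^ 2 := sq_sum_le_card_mul_sum_sq
    _ = (#s - 1) * ∑ i ∈ s.erase k, ‖x i - s.barycenter x‖ ^ 2 := by
      rw [card_erase_of_mem hk, Nat.cast_pred (card_pos.mpr ⟨k, hk⟩)]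
  rw [inertia, ← add_sum_erase s _ hk]
  linarith

/-- Expansion of `‖p • u - q • v‖ ^ 2 ≥ 0`. -/
theorem mul_norm_sq_sub_mul_norm_sq_le (p q : ℝ) (u v : E) :
    p * (q - p) * ‖u‖ ^ 2 - q * (q - p) * ‖v‖ ^ 2 ≤ p * q * ‖u - v‖ ^ 2 := by
  have h := sq_nonneg ‖p • u - q • v‖
  rw [norm_sub_sq_real, norm_smul, norm_smul, real_inner_smul_left, real_inner_smul_right,
    Real.norm_eq_abs, Real.norm_eq_abs, mul_pow, mul_pow, sq_abs, sq_abs] at h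
  rw [norm_sub_sq_real]
  nlinarith [h]

theorem card_succ_mul_inertia_insert_le {j k : ι} [DecidableEq ι] (hs : 2 ≤ #s) (hj : j ∉ s)
    (hk : k ∈ s) :
    (#s + 1) * (insert j s).inertia x ≤ 3 * #s * s.inertia x + (2 * #s - 1) * ‖x k - x j‖ ^ 2 := by
  have hs' : (2 : ℝ) ≤ #s := by exact_mod_cast hs
  have hinsert := inertia_insert s x hj
  have hv := card_mul_norm_sub_barycenter_sq_le s x hk
  have hsq := mul_norm_sq_sub_mul_norm_sq_le (#s - 1) (2 * #s - 1)
    (x j - s.barycenter x) (x k - s.barycenter x)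
  rw [sub_sub_sub_cancel_right (x j), norm_sub_rev (x j) (x k)] at hsq
  refine le_of_mul_le_mul_left ?_ (by linarith : (0 : ℝ) < #s - 1)
  nlinarith [mul_le_mul_of_nonneg_left hv (by linarith : (0 : ℝ) ≤ 2 * #s - 1)]

end Finset

theorem stmt16_general (N n : ℕ) (hn : 4 ≤ n) (I : Finset (Fin N)) (hI : I.card = n - 1)
    (j : Fin N) (hj : j ∉ I) (x : Fin N → EuclideanSpace ℝ (Fin 2))
    (a b : ℝ) (hb : b = a / 3)
    (h1 : 2 * a ≤ ∑ i ∈ insert j I, ‖x i - (n : ℝ)⁻¹ • ∑ m ∈ insert j I, x m‖ ^ 2)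
    (h2 : ∑ i ∈ I, ‖x i - ((n : ℝ) - 1)⁻¹ • ∑ m ∈ I, x m‖ ^ 2 ≤ 2 * b) :
    ∀ k ∈ I, 2 * a / (2 * (n : ℝ) - 3) ≤ ‖x k - x j‖ ^ 2 := by
  intro k hk
  have hn' : (4 : ℝ) ≤ n := by exact_mod_cast hn
  have hcardI : (#I : ℝ) = n - 1 := by rw [hI, Nat.cast_pred (by omega)]
  have hcardJ : (#(insert j I) : ℝ) = n := by
    rw [card_insert_of_notMem hj, Nat.cast_succ, hcardI, sub_add_cancel]
  rw [← hcardJ] at h1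
  rw [← hcardI] at h2
  change 2 * a ≤ (insert j I).inertia x at h1
  change I.inertia x ≤ 2 * b at h2
  have key := I.card_succ_mul_inertia_insert_le x (by omega) hj hk
  rw [hcardI] at key
  rw [div_le_iff₀ (by linarith)]
  nlinarith [mul_le_mul_of_nonneg_left h1 (by linarith : (0 : ℝ) ≤ n),
    mul_le_mul_of_nonneg_left h2 (by linarith : (0 : ℝ) ≤ 3 * (n - 1))]

/-- For n ≥ 4, I ⊆ {1,…,N} with |I| = n−1, j ∉ I, a > 0, b = a/3,
if ∑_{i∈I∪{j}} |xᵢ − x̄^{I∪{j}}|² ≥ 2a and ∑_{i∈I} |xᵢ − x̄^I|² ≤ 2b,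
then min_{k∈I} |x_k − x_j|² ≥ 2a/(2n−3). -/
theorem stmt16 (N n : ℕ) (hn : 4 ≤ n) (I : Finset (Fin N)) (hI : I.card = n - 1)
    (j : Fin N) (hj : j ∉ I) (x : Fin N → EuclideanSpace ℝ (Fin 2))
    (a b : ℝ) (ha : 0 < a) (hb : b = a / 3)
    (h1 : 2 * a ≤ ∑ i ∈ insert j I, ‖x i - (n : ℝ)⁻¹ • ∑ m ∈ insert j I, x m‖ ^ 2)
    (h2 : ∑ i ∈ I, ‖x i - ((n : ℝ) - 1)⁻¹ • ∑ m ∈ I, x m‖ ^ 2 ≤ 2 * b) :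
    ∀ k ∈ I, 2 * a / (2 * (n : ℝ) - 3) ≤ ‖x k - x j‖ ^ 2 :=
  stmt16_general N n hn I hI j hj x a b hb h1 h2
end

section
/- Let φ : ℝ → ℝ be continuous and 2π-periodic, and set φ̄(x) = φ(x) − (2π)^{-1}∫₀^{2π}φ(y)dy. Then for all σ > 0 and θ ∈ [0,2π), |∫_ℝ φ(θ + σx) e^{−x²/2}/√(2π) dx − (2π)^{-1}∫₀^{2π}φ(x)dx| ≤ (2√(2π)/σ) sup_{x∈[0,2π)} |φ(x)|. -/
open Real MeasureTheory Set Function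

/-! Let `m` be the mean of `φ` over a period. Then `ψ = φ - m` has mean zero, so its primitive
`Ψ` is `2π`-periodic, and since `Ψ` vanishes at both ends of `[0, 2π]` while `|ψ| ≤ 2 sup |φ|`,
we get `|Ψ| ≤ 2π sup |φ|`. Gaussian integration by parts turns `∫ ψ (θ + σ x) e^{-x²/2} dx`
into `σ⁻¹ ∫ x e^{-x²/2} Ψ (θ + σ x) dx`, which is at most `σ⁻¹ · 2 · 2π sup |φ|` because
`∫ |x| e^{-x²/2} dx = 2`. -/

section Gaussian

lemma neg_sq_div_two_eq (x : ℝ) : -x ^ 2 / 2 = -(1 / 2) * x ^ 2 := by ring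

lemma integrable_exp_neg_sq_div_two : Integrable fun x : ℝ ↦ exp (-x ^ 2 / 2) := by
  simpa only [neg_sq_div_two_eq] using integrable_exp_neg_mul_sq one_half_pos

lemma integrable_mul_exp_neg_sq_div_two : Integrable fun x : ℝ ↦ x * exp (-x ^ 2 / 2) := by
  simpa only [neg_sq_div_two_eq] using integrable_mul_exp_neg_mul_sq one_half_pos

lemma integral_exp_neg_sq_div_two : ∫ x : ℝ, exp (-x ^ 2 / 2) = √(2 * π) := by
  simp only [neg_sq_div_two_eq, integral_gaussian]
  congr 1
  field_simp

lemma integral_Ioi_mul_exp_neg_sq_div_two : ∫ x in Ioi (0 : ℝ), x * exp (-x ^ 2 / 2) = 1 := by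
  have h := integral_mul_cexp_neg_mul_sq (b := 1 / 2) (by norm_num)
  norm_num at h
  apply Complex.ofReal_injective
  rw [← integral_complex_ofReal]
  push_cast
  rw [← h]
  congr 1 with x
  ring_nf

lemma integral_abs_mul_exp_neg_sq_div_two : ∫ x : ℝ, |x| * exp (-x ^ 2 / 2) = 2 := by
  have h := integral_comp_abs (f := fun x ↦ x * exp (-x ^ 2 / 2))
  simp only [sq_abs] at h
  rw [h, integral_Ioi_mul_exp_neg_sq_div_two, mul_one]

lemma hasDerivAt_exp_neg_sq_div_two (x : ℝ) :
    HasDerivAt (fun x ↦ exp (-x ^ 2 / 2)) (-x * exp (-x ^ 2 / 2)) x := by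
  have h : HasDerivAt (fun x : ℝ ↦ -x ^ 2 / 2) (-x) x :=
    ((hasDerivAt_pow 2 x).neg.div_const 2).congr_deriv (by norm_num; ring)
  simpa only [mul_comm] using h.exp

lemma abs_integral_mul_exp_neg_sq_div_two_mul_le {G : ℝ → ℝ} {B : ℝ}
    (hB : ∀ x, |G x| ≤ B) :
    |∫ x, x * exp (-x ^ 2 / 2) * G x| ≤ 2 * B := by
  have hint : Integrable fun x : ℝ ↦ |x| * exp (-x ^ 2 / 2) := by
    simpa only [abs_mul, abs_exp] using integrable_mul_exp_neg_sq_div_two.abs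
  calc |∫ x, x * exp (-x ^ 2 / 2) * G x|
      ≤ ∫ x, |x| * exp (-x ^ 2 / 2) * B := by
        refine norm_integral_le_of_norm_le (G := ℝ) (hint.mul_const B) (ae_of_all _ fun x ↦ ?_)
        rw [Real.norm_eq_abs, abs_mul, abs_mul, abs_exp]
        gcongr
        exact hB x
    _ = 2 * B := by rw [integral_mul_const, integral_abs_mul_exp_neg_sq_div_two]

/-- Gaussian integration by parts (Stein's identity). -/
lemma integral_mul_exp_neg_sq_div_two_of_hasDerivAt {G g : ℝ → ℝ} {B b : ℝ}
    (hG : ∀ x, HasDerivAt G (g x) x) (hg : AEStronglyMeasurable g) (hGB : ∀ x, |G x| ≤ B)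
    (hgb : ∀ x, |g x| ≤ b) :
    ∫ x, g x * exp (-x ^ 2 / 2) = ∫ x, x * exp (-x ^ 2 / 2) * G x := by
  have hGm : AEStronglyMeasurable G :=
    (continuous_iff_continuousAt.2 fun x ↦ (hG x).continuousAt).aestronglyMeasurable
  have hu'v : Integrable fun x ↦ -x * exp (-x ^ 2 / 2) * G x := by
    simpa only [Pi.neg_apply, neg_mul] using
      integrable_mul_exp_neg_sq_div_two.neg.mul_bdd hGm (ae_of_all _ hGB)
  have h := integral_mul_deriv_eq_deriv_mul_of_integrable
    (fun x _ ↦ hasDerivAt_exp_neg_sq_div_two x) (fun x _ ↦ hG x)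
    (integrable_exp_neg_sq_div_two.mul_bdd hg (ae_of_all _ hgb)) hu'v
    (integrable_exp_neg_sq_div_two.mul_bdd hGm (ae_of_all _ hGB))
  simp only [neg_mul, integral_neg, neg_neg] at h
  simpa only [mul_comm (g _)] using h

lemma integral_mul_gaussian_density_sub {g : ℝ → ℝ}
    (hg : Integrable fun x ↦ g x * exp (-x ^ 2 / 2)) (c : ℝ) :
    (∫ x, g x * (exp (-x ^ 2 / 2) / √(2 * π))) - c =
      (√(2 * π))⁻¹ * ∫ x, (g x - c) * exp (-x ^ 2 / 2) := by
  simp_rw [sub_mul]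
  rw [integral_sub hg (integrable_exp_neg_sq_div_two.const_mul c)]
  rw [integral_const_mul, integral_exp_neg_sq_div_two]
  simp_rw [← mul_div_assoc]
  rw [integral_div]
  field_simp

end Gaussian

section Mean

variable {f : ℝ → ℝ} {T : ℝ}

lemma abs_inv_mul_intervalIntegral_le (hT : 0 < T) {M : ℝ} (hM : ∀ x, |f x| ≤ M) :
    |T⁻¹ * ∫ x in 0..T, f x| ≤ M := by
  have h := intervalIntegral.norm_integral_le_of_norm_le_const (a := 0) (b := T)
    fun x _ ↦ (norm_eq_abs (f x)).trans_le (hM x)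
  rw [norm_eq_abs, sub_zero, abs_of_pos hT] at h
  rw [abs_mul, abs_inv, abs_of_pos hT, inv_mul_le_iff₀ hT]
  linarith

lemma intervalIntegral_sub_inv_mul_intervalIntegral (hT : T ≠ 0)
    (hf : IntervalIntegrable f volume 0 T) :
    ∫ x in 0..T, (f x - T⁻¹ * ∫ y in 0..T, f y) = 0 := by
  rw [intervalIntegral.integral_sub hf intervalIntegrable_const, intervalIntegral.integral_const,
    smul_eq_mul, sub_zero, mul_inv_cancel_left₀ hT, sub_self]

end Mean

namespace Function.Periodic

variable {f : ℝ → ℝ} {T : ℝ}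

lemma abs_le_iSup_Ico (hf : Periodic f T) (hT : 0 < T) (hc : Continuous f)
    (t : ℝ) : |f t| ≤ ⨆ x : Ico 0 T, |f x| := by
  obtain ⟨y, hy, hfy⟩ := hf.exists_mem_Ico₀ hT t
  have hbdd : BddAbove (range fun x : Ico 0 T ↦ |f x|) :=
    (isCompact_Icc.image hc.abs).bddAbove.mono <| by
      rintro _ ⟨⟨x, hx⟩, rfl⟩
      exact ⟨x, Ico_subset_Icc_self hx, rfl⟩
  rw [hfy]
  exact le_ciSup hbdd ⟨y, hy⟩

lemma periodic_primitive_of_integral_eq_zero (hf : Periodic f T) (hc : Continuous f)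
    (h0 : ∫ x in 0..T, f x = 0) : Periodic (fun t ↦ ∫ x in 0..t, f x) T := fun t ↦ by
  simp only [hf.intervalIntegral_add_eq_add 0 t fun _ _ ↦ hc.intervalIntegrable _ _, zero_add,
    h0, add_zero]

/-- At `s ∈ [0, T)` the primitive is bounded by `C * s` (integrating from `0`) and by
`C * (T - s)` (integrating from `T`, where it also vanishes); average the two bounds. -/
lemma abs_primitive_le_of_integral_eq_zero (hf : Periodic f T) (hT : 0 < T)
    (hc : Continuous f) (h0 : ∫ x in 0..T, f x = 0) {C : ℝ} (hC : ∀ x, |f x| ≤ C) (t : ℝ) :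
    |∫ x in 0..t, f x| ≤ C * T / 2 := by
  obtain ⟨s, ⟨hs0, hsT⟩, hts⟩ :=
    (hf.periodic_primitive_of_integral_eq_zero hc h0).exists_mem_Ico₀ hT t
  have hleft : |∫ x in 0..s, f x| ≤ C * s := by
    simpa only [Real.norm_eq_abs, sub_zero, abs_of_nonneg hs0] using
      intervalIntegral.norm_integral_le_of_norm_le_const (a := 0) (b := s)
        fun x _ ↦ (norm_eq_abs (f x)).trans_le (hC x)
  have hright : |∫ x in s..T, f x| ≤ C * (T - s) := by
    simpa only [Real.norm_eq_abs, abs_of_nonneg (sub_nonneg.2 hsT.le)] using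
      intervalIntegral.norm_integral_le_of_norm_le_const (a := s) (b := T)
        fun x _ ↦ (norm_eq_abs (f x)).trans_le (hC x)
  have hsplit : ∫ x in 0..s, f x = -∫ x in s..T, f x := by
    rw [eq_neg_iff_add_eq_zero, intervalIntegral.integral_add_adjacent_intervals
      (hc.intervalIntegrable _ _) (hc.intervalIntegrable _ _), h0]
  rw [← abs_neg, ← hsplit] at hright
  rw [hts]
  linarith

lemma abs_integral_comp_mul_exp_neg_sq_div_two_le {C σ : ℝ}
    (hf : Periodic f T) (hT : 0 < T) (hc : Continuous f) (h0 : ∫ x in 0..T, f x = 0)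
    (hC : ∀ x, |f x| ≤ C) (hσ : 0 < σ) (θ : ℝ) :
    |∫ x, f (θ + σ * x) * exp (-x ^ 2 / 2)| ≤ C * T / σ := by
  have hF (x : ℝ) : HasDerivAt (fun x ↦ ∫ y in 0..θ + σ * x, f y) (σ * f (θ + σ * x)) x := by
    have hprim := intervalIntegral.integral_hasDerivAt_right (hc.intervalIntegrable 0 (θ + σ * x))
      (hc.stronglyMeasurableAtFilter _ _) hc.continuousAt
    have h := hprim.comp x (((hasDerivAt_id x).const_mul σ).const_add θ)
    exact h.congr_deriv (by ring)
  have hFC (x : ℝ) := hf.abs_primitive_le_of_integral_eq_zero hT hc h0 hC (θ + σ * x)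
  have hparts := integral_mul_exp_neg_sq_div_two_of_hasDerivAt hF
    (by fun_prop : Continuous fun x ↦ σ * f (θ + σ * x)).aestronglyMeasurable hFC
    (b := σ * C) fun x ↦ by rw [abs_mul, abs_of_pos hσ]; gcongr; exact hC _
  have hbound := abs_integral_mul_exp_neg_sq_div_two_mul_le hFC
  rw [← hparts] at hbound
  simp only [mul_assoc, integral_const_mul, abs_mul, abs_of_pos hσ] at hbound
  rw [le_div_iff₀ hσ]
  linarith

end Function.Periodic

theorem stmt17_general (φ : ℝ → ℝ) (hφc : Continuous φ) (hφp : Function.Periodic φ (2 * π))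
    (σ : ℝ) (hσ : 0 < σ) (θ : ℝ) :
    |(∫ x : ℝ, φ (θ + σ * x) * (Real.exp (-x ^ 2 / 2) / Real.sqrt (2 * π)))
        - (2 * π)⁻¹ * ∫ y in (0 : ℝ)..(2 * π), φ y|
      ≤ (2 * Real.sqrt (2 * π) / σ) * ⨆ x : Set.Ico (0 : ℝ) (2 * π), |φ x| := by
  set M := ⨆ x : Set.Ico (0 : ℝ) (2 * π), |φ x|
  set m := (2 * π)⁻¹ * ∫ y in (0 : ℝ)..(2 * π), φ y
  have hφM : ∀ t, |φ t| ≤ M := hφp.abs_le_iSup_Ico two_pi_pos hφc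
  have hmM : |m| ≤ M := abs_inv_mul_intervalIntegral_le two_pi_pos hφM
  have hψp : Periodic (fun x ↦ φ x - m) (2 * π) := fun x ↦ by simp only [hφp x]
  have hψ0 : ∫ y in (0 : ℝ)..(2 * π), (φ y - m) = 0 :=
    intervalIntegral_sub_inv_mul_intervalIntegral two_pi_pos.ne' (hφc.intervalIntegrable _ _)
  have hψC (x : ℝ) : |φ x - m| ≤ 2 * M := (abs_sub _ _).trans (by linarith [hφM x])
  have hψ := hψp.abs_integral_comp_mul_exp_neg_sq_div_two_le two_pi_pos
    (hφc.sub continuous_const) hψ0 hψC hσ θ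
  have hφσ : Integrable fun x ↦ φ (θ + σ * x) * exp (-x ^ 2 / 2) :=
    integrable_exp_neg_sq_div_two.bdd_mul
      (by fun_prop : Continuous fun x ↦ φ (θ + σ * x)).aestronglyMeasurable
      (ae_of_all _ fun x ↦ hφM _)
  rw [integral_mul_gaussian_density_sub hφσ, abs_mul, abs_inv, abs_of_pos (by positivity)]
  calc (√(2 * π))⁻¹ * |∫ x, (φ (θ + σ * x) - m) * exp (-x ^ 2 / 2)|
      ≤ (√(2 * π))⁻¹ * (2 * M * (2 * π) / σ) := by gcongr
    _ = 2 * √(2 * π) / σ * M := by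
      field_simp
      rw [sq_sqrt two_pi_pos.le]

/-- Gaussian equidistribution modulo 2π: for φ continuous and 2π-periodic, σ > 0 and
θ ∈ [0,2π), |∫ φ(θ+σx) e^{−x²/2}/√(2π) dx − (2π)⁻¹∫₀^{2π}φ| ≤ (2√(2π)/σ) sup_{[0,2π)}|φ|. -/
theorem stmt17 (φ : ℝ → ℝ) (hφc : Continuous φ) (hφp : Function.Periodic φ (2 * π))
    (σ : ℝ) (hσ : 0 < σ) (θ : ℝ) (hθ : θ ∈ Set.Ico 0 (2 * π)) :
    |(∫ x : ℝ, φ (θ + σ * x) * (Real.exp (-x ^ 2 / 2) / Real.sqrt (2 * π)))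
        - (2 * π)⁻¹ * ∫ y in (0 : ℝ)..(2 * π), φ y|
      ≤ (2 * Real.sqrt (2 * π) / σ) * ⨆ x : Set.Ico (0 : ℝ) (2 * π), |φ x| :=
  stmt17_general φ hφc hφp σ hσ θ
end
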